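/- Let p = 1 and q = m ≥ 2, so that the group is G(m,1,2), φ(X) = (xy)^m, φ(Y) = x^m + y^m and z = xy(x^m − y^m). Then the R-submodule of S/(z) generated by the residue classes of the four monomials x^{m−1}, y^{m−1}, x^{m−1}y^{m}, x^{m}y^{m−1} is isomorphic, as an R-module, to the direct sum of two copies of Coker([[2X, XY],[Y, 2X]]). -/

import Mathlib

open MvPolynomial

noncomputable section

/-- `S = ℂ[x,y]` -/
abbrev Spoly : Type := MvPolynomial Bool ℂ

/-- `R = ℂ[X,Y]` -/
abbrev Rpoly : Type := MvPolynomial (Fin 2) ℂ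

def xv : Spoly := X false
def yv : Spoly := X true
def Xv : Rpoly := X 0
def Yv : Rpoly := X 1

/-- The map `R → S`, `X ↦ (xy)^q`, `Y ↦ x^m + y^m`. -/
def phi (m q : ℕ) : Rpoly →+* Spoly :=
  (aeval ![(xv * yv) ^ q, xv ^ m + yv ^ m]).toRingHom

/-- `z = xy(x^m - y^m)`. -/
def zpol (m : ℕ) : Spoly := xv * yv * (xv ^ m - yv ^ m)

/-- Cokernel of a 2×2 matrix over `R`. -/
abbrev coker (A : Matrix (Fin 2) (Fin 2) Rpoly) : Type :=
  (Fin 2 → Rpoly) ⧸ LinearMap.range A.mulVecLin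

abbrev Amat : Matrix (Fin 2) (Fin 2) Rpoly := !![2 * Xv, Xv * Yv; Yv, 2 * Xv]
abbrev Kmod : Submodule Rpoly (Fin 2 → Rpoly) := LinearMap.range Amat.mulVecLin
abbrev Nmod : Type := coker Amat

def uu : Nmod := Submodule.Quotient.mk ![1, 0]
def vv : Nmod := Submodule.Quotient.mk ![0, 1]

lemma mk_vec (p : Fin 2 → Rpoly) :
    (Submodule.Quotient.mk p : Nmod) = p 0 • uu + p 1 • vv := by
  rw [uu, vv, ← Submodule.Quotient.mk_smul, ← Submodule.Quotient.mk_smul,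
    ← Submodule.Quotient.mk_add]
  congr 1
  funext i; fin_cases i <;> simp

lemma relgen (r s c1 c2 : Rpoly) (h1 : c1 = 2*Xv*r + Xv*Yv*s) (h2 : c2 = Yv*r + 2*Xv*s) :
    c1 • uu + c2 • vv = 0 := by
  rw [show c1 • uu + c2 • vv = Submodule.Quotient.mk ![c1, c2] from by
    rw [mk_vec]; simp, Submodule.Quotient.mk_eq_zero]
  refine ⟨![r, s], ?_⟩
  funext i
  fin_cases i <;>
    simp [Matrix.mulVecLin_apply, Matrix.mulVec, h1, h2, dotProduct,
      Fin.sum_univ_two] <;> ring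

lemma rel1 : (2*Xv) • uu + Yv • vv = 0 := relgen 1 0 _ _ (by ring) (by ring)
lemma rel2 : (Xv*Yv) • uu + (2*Xv) • vv = 0 := relgen 0 1 _ _ (by ring) (by ring)

/-- the sequence w -/
def ww : ℕ → Nmod
  | 0 => uu
  | 1 => Yv • uu + vv
  | (k+2) => Yv • ww (k+1) - Xv • ww k

lemma ww_zero : ww 0 = uu := rfl
lemma ww_one : ww 1 = Yv • uu + vv := rfl
lemma ww_ss (k : ℕ) : ww (k+2) = Yv • ww (k+1) - Xv • ww k := rfl

lemma L1 : ∀ k, (Xv*Yv) • ww (k+1) = (2*Xv^2) • ww k := by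
  have key : ∀ k, (Xv*Yv) • ww (k+1) = (2*Xv^2) • ww k ∧
      (Xv*Yv) • ww (k+2) = (2*Xv^2) • ww (k+1) := by
    intro k
    induction k with
    | zero =>
      constructor
      · show (Xv*Yv) • (Yv • uu + vv) = (2*Xv^2) • uu
        linear_combination (norm := module) (-Xv) • rel1 + Yv • rel2
      · show (Xv*Yv) • (Yv • (Yv • uu + vv) - Xv • uu) = (2*Xv^2) • (Yv • uu + vv)
        linear_combination (norm := module) (-(Xv*Yv)) • rel1 + (Yv^2 - Xv) • rel2
    | succ k ih =>
      refine ⟨ih.2, ?_⟩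
      have ih1 := ih.1
      have ih2 := ih.2
      rw [ww_ss] at ih2
      show (Xv*Yv) • ww (k+3) = (2*Xv^2) • ww (k+2)
      rw [show ww (k+3) = Yv • ww (k+2) - Xv • ww (k+1) from rfl, ww_ss]
      linear_combination (norm := module) (-Xv) • ih1 + Yv • ih2
  exact fun k => (key k).1

/-- the function h -/
def hp (a b : ℕ) : Nmod :=
  if b ≤ a then (Xv^b) • ww (a - b)
  else if (b - a - 1) % 2 = 0 then -((Xv^(a + (b-a-1)/2)) • vv)
  else (Xv^(a + (b-a)/2)) • uu

lemma hp_ge (b k : ℕ) : hp (b + k) b = Xv^b • ww k := by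
  have h1 : b ≤ b + k := by omega
  have h2 : b + k - b = k := by omega
  simp only [hp, if_pos h1, h2]

lemma hp_even (a e : ℕ) : hp a (a + 2*e + 1) = -((Xv^(a+e)) • vv) := by
  have h1 : ¬ (a + 2*e + 1 ≤ a) := by omega
  have h2 : (a + 2*e + 1 - a - 1) % 2 = 0 := by omega
  have h3 : a + (a + 2*e + 1 - a - 1)/2 = a + e := by omega
  simp only [hp, if_neg h1, if_pos h2, h3]

lemma hp_odd (a e : ℕ) : hp a (a + 2*e + 2) = (Xv^(a+e+1)) • uu := by
  have h1 : ¬ (a + 2*e + 2 ≤ a) := by omega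
  have h2 : ¬ ((a + 2*e + 2 - a - 1) % 2 = 0) := by omega
  have h3 : a + (a + 2*e + 2 - a)/2 = a + e + 1 := by omega
  simp only [hp, if_neg h1, if_neg h2, h3]

lemma hp_ge' (a b k : ℕ) (h : a = b + k) : hp a b = Xv^b • ww k := by
  subst h; exact hp_ge b k

lemma hp_even' (a b e : ℕ) (h : b = a + 2*e + 1) : hp a b = -((Xv^(a+e)) • vv) := by
  subst h; exact hp_even a e

lemma hp_odd' (a b e : ℕ) (h : b = a + 2*e + 2) : hp a b = (Xv^(a+e+1)) • uu := by
  subst h; exact hp_odd a e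

lemma hpA (a b : ℕ) : hp (a+1) (b+1) = Xv • hp a b := by
  by_cases hba : b ≤ a
  · rw [hp_ge' (a+1) (b+1) (a-b) (by omega), hp_ge' a b (a-b) (by omega)]
    module
  · obtain ⟨d, rfl⟩ : ∃ d, b = a + d + 1 := ⟨b - a - 1, by omega⟩
    obtain ⟨e, rfl | rfl⟩ := Nat.even_or_odd' d
    · rw [hp_even' (a+1) (a + 2*e + 1 + 1) e (by omega),
        hp_even' a (a + 2*e + 1) e (by omega)]
      module
    · rw [hp_odd' (a+1) (a + (2*e+1) + 1 + 1) e (by omega),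
        hp_odd' a (a + (2*e+1) + 1) e (by omega)]
      module

lemma hpC (a b : ℕ) (hb : 1 ≤ b) : hp (a+1) b = hp a (b+1) := by
  by_cases h1 : b + 1 ≤ a
  · -- b+1 ≤ a : uses L1
    obtain ⟨b', rfl⟩ : ∃ b', b = b' + 1 := ⟨b - 1, by omega⟩
    rw [hp_ge' (a+1) (b'+1) ((a-b'-2)+2) (by omega),
      hp_ge' a (b'+1+1) (a-b'-2) (by omega)]
    rw [ww_ss]
    linear_combination (norm := module) (Xv^b') • L1 (a - b' - 2)
  · by_cases h2 : b = a
    · subst h2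
      obtain ⟨b', rfl⟩ : ∃ b', b = b' + 1 := ⟨b - 1, by omega⟩
      rw [hp_ge' (b'+1+1) (b'+1) 1 (by omega), hp_even' (b'+1) (b'+1+1) 0 (by omega),
        ww_one]
      linear_combination (norm := module) (Xv^b') • rel2
    · by_cases h3 : b = a + 1
      · obtain rfl : b = a + 1 := h3
        rw [hp_ge' (a+1) (a+1) 0 (by omega), hp_odd' a (a+1+1) 0 (by omega), ww_zero]
      · -- b ≥ a+2
        have hd : a + 2 ≤ b := by omega
        obtain ⟨d, rfl⟩ : ∃ d, b = a + d + 2 := ⟨b - a - 2, by omega⟩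
        obtain ⟨e, rfl | rfl⟩ := Nat.even_or_odd' d
        · rw [hp_even' (a+1) (a + 2*e + 2) e (by omega),
            hp_even' a (a + 2*e + 2 + 1) (e+1) (by omega)]
          module
        · rw [hp_odd' (a+1) (a + (2*e+1) + 2) e (by omega),
            hp_odd' a (a + (2*e+1) + 2 + 1) (e+1) (by omega)]
          module

lemma hpB (a b : ℕ) : hp (a+1) b + hp a (b+1) = Yv • hp a b := by
  by_cases h1 : b + 1 ≤ a
  · rw [hp_ge' (a+1) b ((a-b-1)+2) (by omega), hp_ge' a (b+1) (a-b-1) (by omega),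
      hp_ge' a b ((a-b-1)+1) (by omega)]
    rw [ww_ss]
    module
  · by_cases h2 : b = a
    · subst h2
      rw [hp_ge' (b+1) b 1 (by omega), hp_even' b (b+1) 0 (by omega),
        hp_ge' b b 0 (by omega), ww_one, ww_zero]
      module
    · by_cases h3 : b = a + 1
      · obtain rfl : b = a + 1 := h3
        rw [hp_ge' (a+1) (a+1) 0 (by omega), hp_odd' a (a+1+1) 0 (by omega),
          hp_even' a (a+1) 0 (by omega), ww_zero]
        linear_combination (norm := module) (Xv^a) • rel1
      · have hd : a + 2 ≤ b := by omega
        obtain ⟨d, rfl⟩ : ∃ d, b = a + d + 2 := ⟨b - a - 2, by omega⟩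
        obtain ⟨e, rfl | rfl⟩ := Nat.even_or_odd' d
        · -- d = 2e : b = a + 2e + 2, so b-a-1 odd
          rw [hp_even' (a+1) (a + 2*e + 2) e (by omega),
            hp_even' a (a + 2*e + 2 + 1) (e+1) (by omega),
            hp_odd' a (a + 2*e + 2) e (by omega)]
          linear_combination (norm := module) (-(Xv^(a+e))) • rel2
        · -- d = 2e+1 : b = a + 2e + 3, b-a-1 = 2e+2 even
          rw [hp_odd' (a+1) (a + (2*e+1) + 2) e (by omega),
            hp_odd' a (a + (2*e+1) + 2 + 1) (e+1) (by omega),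
            hp_even' a (a + (2*e+1) + 2) (e+1) (by omega)]
          linear_combination (norm := module) (Xv^(a+e+1)) • rel1

/-- the coefficient function g -/
def gg (m i j : ℕ) : Nmod :=
  if i % m = m - 1 ∧ j % m = 0 then hp (i / m) (j / m) else 0

lemma gE1 (m : ℕ) (hm : 2 ≤ m) (i j : ℕ) : gg m (m + i) (m + j) = Xv • gg m i j := by
  have h0 : 0 < m := by omega
  rw [gg, gg, show m + i = i + m by omega, show m + j = j + m by omega,
    Nat.add_mod_right, Nat.add_mod_right, Nat.add_div_right _ h0, Nat.add_div_right _ h0]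
  by_cases h : i % m = m - 1 ∧ j % m = 0
  · rw [if_pos h, if_pos h, hpA]
  · rw [if_neg h, if_neg h, smul_zero]

lemma gE2 (m : ℕ) (hm : 2 ≤ m) (i j : ℕ) :
    gg m (m + i) j + gg m i (m + j) = Yv • gg m i j := by
  have h0 : 0 < m := by omega
  rw [gg, gg, gg, show m + i = i + m by omega, show m + j = j + m by omega,
    Nat.add_mod_right, Nat.add_mod_right, Nat.add_div_right _ h0, Nat.add_div_right _ h0]
  by_cases h : i % m = m - 1 ∧ j % m = 0
  · rw [if_pos h, if_pos h, if_pos h, hpB]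
  · rw [if_neg h, if_neg h, if_neg h, smul_zero, add_zero]

lemma gE3 (m : ℕ) (hm : 2 ≤ m) (i j : ℕ) :
    gg m (m + 1 + i) (1 + j) = gg m (1 + i) (m + 1 + j) := by
  have h0 : 0 < m := by omega
  rw [gg, gg, show m + 1 + i = (1 + i) + m by omega, show m + 1 + j = (1 + j) + m by omega,
    Nat.add_mod_right, Nat.add_mod_right, Nat.add_div_right _ h0, Nat.add_div_right _ h0]
  by_cases h : (1 + i) % m = m - 1 ∧ (1 + j) % m = 0
  · rw [if_pos h, if_pos h]
    have hb : 1 ≤ (1 + j) / m := by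
      have hdvd : m ∣ (1 + j) := Nat.dvd_of_mod_eq_zero h.2
      have : m ≤ 1 + j := Nat.le_of_dvd (by omega) hdvd
      exact (Nat.one_le_div_iff h0).mpr this
    exact hpC _ _ hb
  · rw [if_neg h, if_neg h]

lemma gv1 (m : ℕ) (hm : 2 ≤ m) : gg m (m-1) 0 = uu := by
  have h1 : (m-1) % m = m - 1 := Nat.mod_eq_of_lt (by omega)
  have h2 : (m-1) / m = 0 := Nat.div_eq_of_lt (by omega)
  rw [gg, if_pos ⟨h1, Nat.zero_mod m⟩, h2, show (0:ℕ)/m = 0 from Nat.div_eq_of_lt (by omega)]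
  rw [hp_ge' 0 0 0 (by omega), ww_zero, pow_zero, one_smul]

lemma gv2 (m : ℕ) (hm : 2 ≤ m) : gg m (m-1) m = -vv := by
  have h1 : (m-1) % m = m - 1 := Nat.mod_eq_of_lt (by omega)
  have h2 : (m-1) / m = 0 := Nat.div_eq_of_lt (by omega)
  rw [gg, if_pos ⟨h1, Nat.mod_self m⟩, h2, Nat.div_self (by omega)]
  rw [hp_even' 0 1 0 (by omega)]
  norm_num

lemma gv3 (m : ℕ) (hm : 2 ≤ m) : gg m 0 (m-1) = 0 := by
  rw [gg, if_neg]
  rintro ⟨h1, h2⟩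
  rw [Nat.zero_mod] at h1
  omega

lemma gv4 (m : ℕ) (hm : 2 ≤ m) : gg m m (m-1) = 0 := by
  rw [gg, if_neg]
  rintro ⟨h1, h2⟩
  rw [Nat.mod_self] at h1
  omega

/-- coefficient-extraction linear map -/
def Gmap (f : ℕ → ℕ → Nmod) : Spoly →ₗ[ℂ] Nmod :=
  (Finsupp.lsum ℂ fun d : Bool →₀ ℕ => LinearMap.toSpanSingleton ℂ Nmod (f (d false) (d true))) ∘ₗ
    (AddMonoidAlgebra.coeffLinearEquiv ℂ).toLinearMap

lemma Gmap_monomial (f : ℕ → ℕ → Nmod) (d : Bool →₀ ℕ) (c : ℂ) :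
    Gmap f (monomial d c) = c • f (d false) (d true) := by
  rw [← single_eq_monomial, Gmap, LinearMap.comp_apply]
  exact (Finsupp.lsum_single (S := ℂ) _ d c).trans (LinearMap.toSpanSingleton_apply ℂ Nmod _ c)

lemma xy_pow (a b : ℕ) :
    xv ^ a * yv ^ b = monomial (Finsupp.single false a + Finsupp.single true b) 1 := by
  rw [xv, yv, X_pow_eq_monomial, X_pow_eq_monomial, monomial_mul, one_mul]

lemma Gmap_mulX (m : ℕ) (f : ℕ → ℕ → Nmod)
    (hf : ∀ i j, f (m + i) (m + j) = Xv • f i j) (p : Spoly) :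
    Gmap f ((xv*yv)^m * p) = Xv • Gmap f p := by
  induction p using MvPolynomial.induction_on' with
  | monomial d c =>
    rw [show (xv*yv)^m = monomial (Finsupp.single false m + Finsupp.single true m) 1 by
      rw [mul_pow, xy_pow]]
    simp only [monomial_mul, one_mul, Gmap_monomial]
    simp only [Finsupp.add_apply, Finsupp.single_apply]
    norm_num
    rw [hf, smul_comm]
  | add p q ihp ihq =>
    rw [mul_add, map_add, map_add, ihp, ihq, smul_add]

lemma Gmap_mulY (m : ℕ) (f : ℕ → ℕ → Nmod)
    (hf : ∀ i j, f (m + i) j + f i (m + j) = Yv • f i j) (p : Spoly) :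
    Gmap f ((xv^m + yv^m) * p) = Yv • Gmap f p := by
  induction p using MvPolynomial.induction_on' with
  | monomial d c =>
    rw [add_mul,
      show xv^m = monomial (Finsupp.single false m) 1 by rw [xv, X_pow_eq_monomial],
      show yv^m = monomial (Finsupp.single true m) 1 by rw [yv, X_pow_eq_monomial]]
    simp only [monomial_mul, one_mul, map_add, Gmap_monomial]
    simp only [Finsupp.add_apply, Finsupp.single_apply]
    norm_num
    rw [← smul_add, hf, smul_comm]
  | add p q ihp ihq =>
    rw [mul_add, map_add, map_add, ihp, ihq, smul_add]

lemma Gmap_mulZ (m : ℕ) (f : ℕ → ℕ → Nmod)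
    (hf : ∀ i j, f (m + 1 + i) (1 + j) = f (1 + i) (m + 1 + j)) (p : Spoly) :
    Gmap f (zpol m * p) = 0 := by
  induction p using MvPolynomial.induction_on' with
  | monomial d c =>
    rw [show zpol m = monomial (Finsupp.single false (m+1) + Finsupp.single true 1) 1
        - monomial (Finsupp.single false 1 + Finsupp.single true (m+1)) 1 by
      rw [← xy_pow, ← xy_pow, zpol]; ring, sub_mul]
    simp only [monomial_mul, one_mul, map_sub, Gmap_monomial]
    simp only [Finsupp.add_apply, Finsupp.single_apply]
    norm_num
    rw [hf, sub_self]
  | add p q ihp ihq =>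
    rw [mul_add, map_add, ihp, ihq, add_zero]

lemma phi_X0 (m q : ℕ) : phi m q Xv = (xv*yv)^q := by
  simp [phi, Xv]

lemma phi_X1 (m q : ℕ) : phi m q Yv = xv^m + yv^m := by
  simp [phi, Yv]

lemma phi_C (m q : ℕ) (a : ℂ) : phi m q (C a) = C a := by
  simp [phi]

lemma Gmap_phi (m : ℕ) (f : ℕ → ℕ → Nmod)
    (hfX : ∀ p, Gmap f ((xv*yv)^m * p) = Xv • Gmap f p)
    (hfY : ∀ p, Gmap f ((xv^m + yv^m) * p) = Yv • Gmap f p) :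
    ∀ (r : Rpoly) (p : Spoly), Gmap f (phi m m r * p) = r • Gmap f p := by
  intro r
  induction r using MvPolynomial.induction_on with
  | C a =>
    intro p
    rw [phi_C, C_mul', map_smul, ← algebraMap_eq, algebraMap_smul]
  | add r s ihr ihs =>
    intro p
    rw [map_add, add_mul, map_add, ihr, ihs, add_smul]
  | mul_X r i ih =>
    intro p
    rw [map_mul (phi m m) r (MvPolynomial.X i), mul_assoc, ih]
    fin_cases i
    · show r • Gmap f (phi m m Xv * p) = (r * Xv) • Gmap f p
      rw [phi_X0, hfX, smul_smul]
    · show r • Gmap f (phi m m Yv * p) = (r * Yv) • Gmap f p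
      rw [phi_X1, hfY, smul_smul]

lemma Gmap_xy (f : ℕ → ℕ → Nmod) (a b : ℕ) : Gmap f (xv^a * yv^b) = f a b := by
  rw [xy_pow, Gmap_monomial]
  simp only [Finsupp.add_apply, Finsupp.single_apply]
  norm_num

lemma Gmap_x (f : ℕ → ℕ → Nmod) (a : ℕ) : Gmap f (xv^a) = f a 0 := by
  rw [show xv^a = xv^a * yv^0 by ring, Gmap_xy]

lemma Gmap_y (f : ℕ → ℕ → Nmod) (b : ℕ) : Gmap f (yv^b) = f 0 b := by
  rw [show yv^b = xv^0 * yv^b by ring, Gmap_xy]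

def Ppoly (m : ℕ) (pq : (Fin 2 → Rpoly) × (Fin 2 → Rpoly)) : Spoly :=
  phi m m (pq.1 0) * xv^(m-1) - phi m m (pq.1 1) * (xv^(m-1) * yv^m)
  + phi m m (pq.2 0) * yv^(m-1) - phi m m (pq.2 1) * (xv^m * yv^(m-1))

lemma Pp_G1 (m : ℕ) (hm : 2 ≤ m) (pq : (Fin 2 → Rpoly) × (Fin 2 → Rpoly)) :
    Gmap (gg m) (Ppoly m pq) = pq.1 0 • uu + pq.1 1 • vv := by
  have hphi := Gmap_phi m (gg m) (Gmap_mulX m _ (gE1 m hm)) (Gmap_mulY m _ (gE2 m hm))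
  rw [Ppoly, map_sub, map_add, map_sub, hphi, hphi, hphi, hphi,
    Gmap_x, Gmap_xy, Gmap_y, Gmap_xy, gv1 m hm, gv2 m hm, gv3 m hm, gv4 m hm]
  module

lemma Pp_G2 (m : ℕ) (hm : 2 ≤ m) (pq : (Fin 2 → Rpoly) × (Fin 2 → Rpoly)) :
    Gmap (fun i j => gg m j i) (Ppoly m pq) = pq.2 0 • uu + pq.2 1 • vv := by
  have hphi := Gmap_phi m (fun i j => gg m j i)
    (Gmap_mulX m _ (fun i j => gE1 m hm j i))
    (Gmap_mulY m _ (fun i j => by rw [add_comm]; exact gE2 m hm j i))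
  rw [Ppoly, map_sub, map_add, map_sub, hphi, hphi, hphi, hphi,
    Gmap_x, Gmap_xy, Gmap_y, Gmap_xy]
  show pq.1 0 • gg m 0 (m-1) - pq.1 1 • gg m m (m-1) + pq.2 0 • gg m (m-1) 0
      - pq.2 1 • gg m (m-1) m = _
  rw [gv1 m hm, gv2 m hm, gv3 m hm, gv4 m hm]
  module

lemma Pp_dvd (m : ℕ) (hm : 2 ≤ m) (pq : (Fin 2 → Rpoly) × (Fin 2 → Rpoly))
    (hmem : pq ∈ Kmod.prod Kmod) : zpol m ∣ Ppoly m pq := by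
  obtain ⟨k, rfl⟩ : ∃ k, m = k + 2 := ⟨m - 2, by omega⟩
  rw [Submodule.mem_prod] at hmem
  obtain ⟨⟨r, hr⟩, ⟨s, hs⟩⟩ := hmem
  have hr0 : pq.1 0 = 2*Xv * r 0 + Xv*Yv * r 1 := by
    rw [← hr]
    simp [Matrix.mulVecLin_apply, Matrix.mulVec, dotProduct, Fin.sum_univ_two]
  have hr1 : pq.1 1 = Yv * r 0 + 2*Xv * r 1 := by
    rw [← hr]
    simp [Matrix.mulVecLin_apply, Matrix.mulVec, dotProduct, Fin.sum_univ_two]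
  have hs0 : pq.2 0 = 2*Xv * s 0 + Xv*Yv * s 1 := by
    rw [← hs]
    simp [Matrix.mulVecLin_apply, Matrix.mulVec, dotProduct, Fin.sum_univ_two]
  have hs1 : pq.2 1 = Yv * s 0 + 2*Xv * s 1 := by
    rw [← hs]
    simp [Matrix.mulVecLin_apply, Matrix.mulVec, dotProduct, Fin.sum_univ_two]
  refine ⟨phi (k+2) (k+2) (r 0) * (xv^k * yv^(k+1))
    + phi (k+2) (k+2) (r 1) * (xv^(2*k+2) * yv^(k+1))
    - phi (k+2) (k+2) (s 0) * (xv^(k+1) * yv^k)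
    - phi (k+2) (k+2) (s 1) * (xv^(k+1) * yv^(2*k+2)), ?_⟩
  rw [Ppoly, hr0, hr1, hs0, hs1, zpol]
  simp only [map_add, map_mul, phi_X0, phi_X1, map_ofNat]
  rw [show k + 2 - 1 = k + 1 from rfl]
  ring

lemma Pp_b1 (m : ℕ) : Ppoly m (![1,0], ![0,0]) = xv^(m-1) := by
  rw [Ppoly]
  simp

lemma Pp_b2 (m : ℕ) : Ppoly m (![0,-1], ![0,0]) = xv^(m-1) * yv^m := by
  rw [Ppoly]
  simp

lemma Pp_b3 (m : ℕ) : Ppoly m (![0,0], ![1,0]) = yv^(m-1) := by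
  rw [Ppoly]
  simp

lemma Pp_b4 (m : ℕ) : Ppoly m (![0,0], ![0,-1]) = xv^m * yv^(m-1) := by
  rw [Ppoly]
  simp


lemma Ppoly_add (m : ℕ) (a b : (Fin 2 → Rpoly) × (Fin 2 → Rpoly)) :
    Ppoly m (a + b) = Ppoly m a + Ppoly m b := by
  simp only [Ppoly, Prod.fst_add, Prod.snd_add, Pi.add_apply, map_add]
  ring

lemma Ppoly_smul (m : ℕ) (r : Rpoly) (a : (Fin 2 → Rpoly) × (Fin 2 → Rpoly)) :
    Ppoly m (r • a) = phi m m r * Ppoly m a := by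
  simp only [Ppoly, Prod.smul_fst, Prod.smul_snd, Pi.smul_apply, smul_eq_mul, map_mul]
  ring

set_option maxHeartbeats 1000000 in
set_option synthInstance.maxHeartbeats 2000000 in
theorem stmt3 (m : ℕ) (hm : 2 ≤ m) :
    letI : Module Rpoly (Spoly ⧸ Ideal.span {zpol m}) :=
      ((Ideal.Quotient.mk (Ideal.span {zpol m})).comp (phi m m)).toModule
    let M : Submodule Rpoly (Spoly ⧸ Ideal.span {zpol m}) :=
      Submodule.span Rpoly
        {Ideal.Quotient.mk (Ideal.span {zpol m}) (xv ^ (m - 1)),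
         Ideal.Quotient.mk (Ideal.span {zpol m}) (yv ^ (m - 1)),
         Ideal.Quotient.mk (Ideal.span {zpol m}) (xv ^ (m - 1) * yv ^ m),
         Ideal.Quotient.mk (Ideal.span {zpol m}) (xv ^ m * yv ^ (m - 1))}
    Nonempty (M ≃ₗ[Rpoly]
      (coker !![2 * Xv, Xv * Yv; Yv, 2 * Xv]) × (coker !![2 * Xv, Xv * Yv; Yv, 2 * Xv])) := by
  letI inst : Module Rpoly (Spoly ⧸ Ideal.span {zpol m}) :=
    ((Ideal.Quotient.mk (Ideal.span {zpol m})).comp (phi m m)).toModule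
  intro M
  have hsmul : ∀ (r : Rpoly) (s : Spoly),
      r • (Ideal.Quotient.mk (Ideal.span {zpol m}) s)
        = Ideal.Quotient.mk (Ideal.span {zpol m}) (phi m m r * s) :=
    fun r s => (map_mul (Ideal.Quotient.mk (Ideal.span {zpol m})) (phi m m r) s).symm
  let Hmap : ((Fin 2 → Rpoly) × (Fin 2 → Rpoly)) →ₗ[Rpoly]
      (Spoly ⧸ Ideal.span {zpol m}) :=
    { toFun := fun pq => Ideal.Quotient.mk (Ideal.span {zpol m}) (Ppoly m pq)
      map_add' := by
        intro a b
        rw [Ppoly_add]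
        exact map_add (Ideal.Quotient.mk (Ideal.span {zpol m})) _ _
      map_smul' := by
        intro r a
        rw [Ppoly_smul]
        exact (hsmul r (Ppoly m a)).symm }
  have hHmap : ∀ pq, Hmap pq = Ideal.Quotient.mk (Ideal.span {zpol m}) (Ppoly m pq) :=
    fun _ => rfl
  have hrange : LinearMap.range Hmap = M := by
    apply le_antisymm
    · rintro x ⟨pq, rfl⟩
      rw [hHmap]
      have expand : Ideal.Quotient.mk (Ideal.span {zpol m}) (Ppoly m pq)
          = pq.1 0 • Ideal.Quotient.mk (Ideal.span {zpol m}) (xv^(m-1))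
            - pq.1 1 • Ideal.Quotient.mk (Ideal.span {zpol m}) (xv^(m-1) * yv^m)
            + pq.2 0 • Ideal.Quotient.mk (Ideal.span {zpol m}) (yv^(m-1))
            - pq.2 1 • Ideal.Quotient.mk (Ideal.span {zpol m}) (xv^m * yv^(m-1)) := by
        rw [hsmul, hsmul, hsmul, hsmul, ← map_sub, ← map_add, ← map_sub, Ppoly]
      rw [expand]
      refine sub_mem (add_mem (sub_mem (Submodule.smul_mem _ _ ?_)
        (Submodule.smul_mem _ _ ?_)) (Submodule.smul_mem _ _ ?_))
        (Submodule.smul_mem _ _ ?_) <;>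
        apply Submodule.subset_span <;> simp
    · apply Submodule.span_le.mpr
      rintro x hx
      simp only [Set.mem_insert_iff, Set.mem_singleton_iff] at hx
      rcases hx with rfl | rfl | rfl | rfl
      · exact ⟨(![1,0], ![0,0]), by rw [hHmap, Pp_b1]⟩
      · exact ⟨(![0,0], ![1,0]), by rw [hHmap, Pp_b3]⟩
      · exact ⟨(![0,-1], ![0,0]), by rw [hHmap, Pp_b2]⟩
      · exact ⟨(![0,0], ![0,-1]), by rw [hHmap, Pp_b4]⟩
  have hker : LinearMap.ker Hmap = Kmod.prod Kmod := by
    ext pq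
    rw [LinearMap.mem_ker, Submodule.mem_prod]
    constructor
    · intro h
      have h0 : Ideal.Quotient.mk (Ideal.span {zpol m}) (Ppoly m pq) = 0 := by
        rw [← hHmap]; exact h
      rw [Ideal.Quotient.eq_zero_iff_mem, Ideal.mem_span_singleton] at h0
      obtain ⟨t, ht⟩ := h0
      have e1 : pq.1 0 • uu + pq.1 1 • vv = 0 := by
        rw [← Pp_G1 m hm pq, ht]
        exact Gmap_mulZ m _ (gE3 m hm) t
      have e2 : pq.2 0 • uu + pq.2 1 • vv = 0 := by
        rw [← Pp_G2 m hm pq, ht]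
        exact Gmap_mulZ m _ (fun i j => (gE3 m hm j i).symm) t
      exact ⟨(Submodule.Quotient.mk_eq_zero _).mp (by rw [mk_vec]; exact e1),
             (Submodule.Quotient.mk_eq_zero _).mp (by rw [mk_vec]; exact e2)⟩
    · intro hmem
      obtain ⟨t, ht⟩ := Pp_dvd m hm pq (Submodule.mem_prod.mpr hmem)
      rw [hHmap, Ideal.Quotient.eq_zero_iff_mem, Ideal.mem_span_singleton]
      exact ⟨t, ht⟩
  have hsurj : Function.Surjective (Kmod.mkQ.prodMap Kmod.mkQ) := by
    rintro ⟨n1, n2⟩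
    obtain ⟨a, ha⟩ := Submodule.mkQ_surjective Kmod n1
    obtain ⟨b, hb⟩ := Submodule.mkQ_surjective Kmod n2
    exact ⟨(a, b), by rw [LinearMap.prodMap_apply, ha, hb]⟩
  have hkerp : LinearMap.ker Hmap = LinearMap.ker (Kmod.mkQ.prodMap Kmod.mkQ) := by
    rw [hker, LinearMap.ker_prodMap, Submodule.ker_mkQ]
  exact ⟨(LinearEquiv.ofEq M (LinearMap.range Hmap) hrange.symm).trans
    ((Hmap.quotKerEquivRange).symm.trans
      ((Submodule.quotEquivOfEq _ _ hkerp).trans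
        ((Kmod.mkQ.prodMap Kmod.mkQ).quotKerEquivOfSurjective hsurj)))⟩
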